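/- arXiv:1808.02970 — 9 statements merged into one kernel-verified Lean document; each statement's English description precedes it below -/
import Mathlib

section
/- For every integer κ ≥ 1, Q^κ = ⋃_{j=1}^{q} (Q^κ ∩ T^{−j}(Q^{κ−1})), and the sets Q^κ ∩ T^{−j}(Q^{κ−1}), j = 1, …, q, are pairwise disjoint. -/
open Set MeasureTheory

/-- `U⁰ = B` and `U^{κ+1} = U^κ \ (U^κ ∩ ⋂_{i=1}^q T^{−i}((U^κ)ᶜ))`. -/
def Uset {Ω : Type*} (T : Ω → Ω) (B : Set Ω) (q : ℕ) : ℕ → Set Ω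
  | 0 => B
  | κ + 1 =>
      Uset T B q κ \
        (Uset T B q κ ∩ ⋂ i ∈ Finset.Icc 1 q, T^[i] ⁻¹' (Uset T B q κ)ᶜ)

/-- `Q^κ = U^κ ∩ ⋂_{i=1}^q T^{−i}((U^κ)ᶜ)`. -/
def Qset {Ω : Type*} (T : Ω → Ω) (B : Set Ω) (q : ℕ) (κ : ℕ) : Set Ω :=
  Uset T B q κ ∩ ⋂ i ∈ Finset.Icc 1 q, T^[i] ⁻¹' (Uset T B q κ)ᶜ

lemma mem_Qset_iff {Ω : Type*} {T : Ω → Ω} {B : Set Ω} {q κ : ℕ} {x : Ω} :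
    x ∈ Qset T B q κ ↔ x ∈ Uset T B q κ ∧ ∀ i ∈ Finset.Icc 1 q, T^[i] x ∉ Uset T B q κ := by
  simp [Qset]

lemma Uset_succ_eq {Ω : Type*} (T : Ω → Ω) (B : Set Ω) (q κ : ℕ) :
    Uset T B q (κ + 1) = Uset T B q κ \ Qset T B q κ := rfl

lemma Qset_avoid {Ω : Type*} {T : Ω → Ω} {B : Set Ω} {q m : ℕ} {y : Ω}
    (hy : y ∈ Qset T B q m) {i : ℕ} (hi : i ∈ Finset.Icc 1 q) :
    T^[i] y ∉ Qset T B q m :=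
  fun h => (mem_Qset_iff.1 hy).2 i hi (mem_Qset_iff.1 h).1

theorem Qset_eq_disjoint_union {Ω : Type*} (T : Ω → Ω) (B : Set Ω) (q : ℕ) (hq : 1 ≤ q)
    (κ : ℕ) (hκ : 1 ≤ κ) :
    Qset T B q κ = ⋃ j ∈ Finset.Icc 1 q, (Qset T B q κ ∩ T^[j] ⁻¹' Qset T B q (κ - 1)) ∧
    ∀ j₁ ∈ Finset.Icc 1 q, ∀ j₂ ∈ Finset.Icc 1 q, j₁ ≠ j₂ →
      Disjoint (Qset T B q κ ∩ T^[j₁] ⁻¹' Qset T B q (κ - 1))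
        (Qset T B q κ ∩ T^[j₂] ⁻¹' Qset T B q (κ - 1)) := by
  obtain ⟨k, rfl⟩ : ∃ k, κ = k + 1 := ⟨κ - 1, (Nat.succ_pred_eq_of_pos hκ).symm⟩
  have hk1 : k + 1 - 1 = k := rfl
  constructor
  · ext x
    simp only [mem_iUnion, mem_inter_iff, exists_prop, hk1]
    constructor
    · intro hx
      by_contra hcon
      push_neg at hcon
      obtain ⟨hxU, hxI⟩ := mem_Qset_iff.1 hx
      rw [Uset_succ_eq] at hxU
      -- x ∈ U k \ Q k
      have hQk : x ∈ Qset T B q k := by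
        refine mem_Qset_iff.2 ⟨hxU.1, fun i hi hUi => ?_⟩
        have h1 : T^[i] x ∉ Uset T B q (k + 1) := hxI i hi
        have h2 : T^[i] x ∉ Qset T B q k := fun h => hcon i hi hx h
        exact h1 (by rw [Uset_succ_eq]; exact ⟨hUi, h2⟩)
      exact hxU.2 hQk
    · rintro ⟨j, hj, hx, -⟩
      exact hx
  · intro j₁ hj₁ j₂ hj₂ hne
    wlog hlt : j₁ < j₂ generalizing j₁ j₂
    · exact (this j₂ hj₂ j₁ hj₁ hne.symm (by omega)).symm
    rw [Set.disjoint_left]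
    rintro x ⟨hxQ, hx1⟩ ⟨-, hx2⟩
    simp only [mem_preimage, hk1] at hx1 hx2
    simp only [Finset.mem_Icc] at hj₁ hj₂
    have hd : j₂ - j₁ ∈ Finset.Icc 1 q := Finset.mem_Icc.2 (by omega)
    have : T^[j₂ - j₁] (T^[j₁] x) = T^[j₂] x := by
      rw [← Function.iterate_add_apply]
      congr 1
      omega
    exact Qset_avoid hx1 hd (this ▸ hx2)
end

section
/- For every integer κ ≥ 1, μ(Q^κ) ≤ μ(Q^{κ−1}). -/
open Set MeasureTheory

lemma measurableSet_Uset {Ω : Type*} [MeasurableSpace Ω] {T : Ω → Ω}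
    (hT : Measurable T) {B : Set Ω} (hB : MeasurableSet B) (q κ : ℕ) :
    MeasurableSet (Uset T B q κ) := by
  induction κ with
  | zero => exact hB
  | succ κ ih =>
    exact ih.diff (ih.inter (Finset.measurableSet_biInter _
      fun i _ => (hT.iterate i) ih.compl))

lemma measurableSet_Qset {Ω : Type*} [MeasurableSpace Ω] {T : Ω → Ω}
    (hT : Measurable T) {B : Set Ω} (hB : MeasurableSet B) (q κ : ℕ) :
    MeasurableSet (Qset T B q κ) :=
  (measurableSet_Uset hT hB q κ).inter (Finset.measurableSet_biInter _
    fun i _ => (hT.iterate i) (measurableSet_Uset hT hB q κ).compl)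

lemma hpres_iterate {Ω : Type*} [MeasurableSpace Ω] (μ : Measure Ω) {T : Ω → Ω}
    (hT : Measurable T)
    (hpres : ∀ E : Set Ω, MeasurableSet E → μ (T ⁻¹' E) = μ E)
    (m : ℕ) (E : Set Ω) (hE : MeasurableSet E) :
    μ (T^[m] ⁻¹' E) = μ E := by
  induction m with
  | zero => simp
  | succ m ih =>
    rw [Function.iterate_succ, Set.preimage_comp,
      hpres _ ((hT.iterate m) hE)]
    exact ih

theorem measure_Qset_antitone {Ω : Type*} [MeasurableSpace Ω] (μ : Measure Ω)
    [IsProbabilityMeasure μ] (T : Ω → Ω) (hT : Measurable T) (B : Set Ω)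
    (hB : MeasurableSet B)
    (hpres : ∀ E : Set Ω, MeasurableSet E → μ (T ⁻¹' E) = μ E)
    (q : ℕ) (hq : 1 ≤ q) (κ : ℕ) (hκ : 1 ≤ κ) :
    μ (Qset T B q κ) ≤ μ (Qset T B q (κ - 1)) := by
  obtain ⟨κ', rfl⟩ : ∃ κ', κ = κ' + 1 := ⟨κ - 1, (Nat.succ_pred_eq_of_pos hκ).symm⟩
  simp only [Nat.add_sub_cancel]
  have hUsucc : Uset T B q (κ' + 1) = Uset T B q κ' \ Qset T B q κ' := rfl
  -- separation: points of Q^ρ don't return to U^ρ within q steps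
  have hsep : ∀ ρ (x : Ω) (i : ℕ), i ∈ Finset.Icc 1 q → x ∈ Qset T B q ρ →
      T^[i] x ∉ Uset T B q ρ := by
    intro ρ x i hi hx
    exact Set.mem_iInter₂.mp hx.2 i hi
  -- covering
  set A : ℕ → Set Ω := fun i => Qset T B q (κ' + 1) ∩ T^[i] ⁻¹' Qset T B q κ' with hA
  have hcover : Qset T B q (κ' + 1) ⊆ ⋃ i ∈ Finset.Icc 1 q, A i := by
    intro x hx
    have hxU : x ∈ Uset T B q (κ' + 1) := hx.1
    rw [hUsucc] at hxU
    have hex : ∃ i ∈ Finset.Icc 1 q, T^[i] x ∈ Uset T B q κ' := by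
      by_contra h
      push_neg at h
      exact hxU.2 ⟨hxU.1, Set.mem_iInter₂.mpr fun i hi => h i hi⟩
    obtain ⟨i, hi, hiU⟩ := hex
    have hnotU : T^[i] x ∉ Uset T B q (κ' + 1) := hsep _ x i hi hx
    rw [hUsucc] at hnotU
    have hQ' : T^[i] x ∈ Qset T B q κ' := by
      by_contra h
      exact hnotU ⟨hiU, h⟩
    exact Set.mem_biUnion hi ⟨hx, hQ'⟩
  set C : ℕ → Set Ω := fun i => T^[q - i] ⁻¹' A i with hC
  -- C i ⊆ T^[q] ⁻¹' Q^{κ'}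
  have hCsub : ∀ i ∈ Finset.Icc 1 q, C i ⊆ T^[q] ⁻¹' Qset T B q κ' := by
    intro i hi y hy
    have h2 : T^[i] (T^[q - i] y) ∈ Qset T B q κ' := hy.2
    rw [← Function.iterate_add_apply] at h2
    have : i + (q - i) = q := by
      simp only [Finset.mem_Icc] at hi; omega
    rwa [this] at h2
  -- pairwise disjointness of the C i
  have hkey : ∀ i ∈ Finset.Icc 1 q, ∀ j ∈ Finset.Icc 1 q, i < j → Disjoint (C i) (C j) := by
    intro i hi j hj hij
    rw [Set.disjoint_left]
    intro y hyi hyj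
    have h1 : T^[q - i] y ∈ Qset T B q (κ' + 1) := hyi.1
    have h2 : T^[q - j] y ∈ Qset T B q (κ' + 1) := hyj.1
    have heq : T^[j - i] (T^[q - j] y) = T^[q - i] y := by
      rw [← Function.iterate_add_apply]
      congr 1
      simp only [Finset.mem_Icc] at hi hj; omega
    have hm : j - i ∈ Finset.Icc 1 q := by
      simp only [Finset.mem_Icc] at hi hj ⊢; omega
    exact hsep _ _ _ hm h2 (heq ▸ h1.1)
  have hdisj : (↑(Finset.Icc 1 q) : Set ℕ).PairwiseDisjoint C := by
    intro i hi j hj hij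
    rcases lt_or_gt_of_ne hij with h | h
    · exact hkey i (by simpa using hi) j (by simpa using hj) h
    · exact (hkey j (by simpa using hj) i (by simpa using hi) h).symm
  have hmA : ∀ i, MeasurableSet (A i) := fun i =>
    (measurableSet_Qset hT hB q (κ' + 1)).inter
      ((hT.iterate i) (measurableSet_Qset hT hB q κ'))
  have hmC : ∀ i, MeasurableSet (C i) := fun i => (hT.iterate (q - i)) (hmA i)
  calc μ (Qset T B q (κ' + 1))
      ≤ μ (⋃ i ∈ Finset.Icc 1 q, A i) := measure_mono hcover
    _ ≤ ∑ i ∈ Finset.Icc 1 q, μ (A i) := measure_biUnion_finset_le _ _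
    _ = ∑ i ∈ Finset.Icc 1 q, μ (C i) := by
        refine Finset.sum_congr rfl fun i _ => ?_
        exact (hpres_iterate μ hT hpres (q - i) (A i) (hmA i)).symm
    _ = μ (⋃ i ∈ Finset.Icc 1 q, C i) :=
        (measure_biUnion_finset hdisj fun i _ => hmC i).symm
    _ ≤ μ (T^[q] ⁻¹' Qset T B q κ') :=
        measure_mono (Set.iUnion₂_subset hCsub)
    _ = μ (Qset T B q κ') :=
        hpres_iterate μ hT hpres q _ (measurableSet_Qset hT hB q κ')
end

section
/- If μ(U^∞) = 0 and μ(Q⁰) > 0, then the mean of the finite-time cluster size distribution satisfies Σ_{j=1}^{∞} j·π(j) = μ(B)/μ(Q⁰) (in particular the series converges). -/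
open Set MeasureTheory

/-- `U^∞ = ⋂_{κ ≥ 0} U^κ`. -/
def Uinf {Ω : Type*} (T : Ω → Ω) (B : Set Ω) (q : ℕ) : Set Ω :=
  ⋂ κ, Uset T B q κ

/-- `W_m = ⋂_{i=0}^{m-1} T^{−i}(Bᶜ)`. -/
def Wset {Ω : Type*} (T : Ω → Ω) (B : Set Ω) (m : ℕ) : Set Ω :=
  ⋂ i ∈ Finset.range m, T^[i] ⁻¹' Bᶜ

/-- `H_q(0) = W_q \ W_{q+1}` and, for `κ ≥ 1`,
`H_q(κ) = T^{−q}(Q^{κ−1}) \ ⋃_{i=0}^{q−1} T^{−i}(Q^κ)`. -/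
def Hset {Ω : Type*} (T : Ω → Ω) (B : Set Ω) (q : ℕ) : ℕ → Set Ω
  | 0 => Wset T B q \ Wset T B (q + 1)
  | κ + 1 =>
      T^[q] ⁻¹' Qset T B q κ \ ⋃ i ∈ Finset.range q, T^[i] ⁻¹' Qset T B q (κ + 1)


open Filter Topology

set_option linter.unusedSectionVars false
set_option linter.unusedTactic false

/-- Analytic helper: for a nonnegative antitone sequence whose partial sums tend to `L`,
the "mean cluster size" series has sum `L / a 0`. -/
lemma hasSum_helper {a : ℕ → ℝ} {L : ℝ} (hnn : ∀ n, 0 ≤ a n) (hanti : Antitone a)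
    (h0 : 0 < a 0)
    (hS : Tendsto (fun n => ∑ j ∈ Finset.range n, a j) atTop (𝓝 L)) :
    HasSum (fun j : ℕ => ((j : ℝ) + 1) * ((a j - a (j + 1)) / a 0)) (L / a 0) := by
  set S : ℕ → ℝ := fun n => ∑ j ∈ Finset.range n, a j with hSdef
  -- n * a n → 0
  have hdiv : Tendsto (fun n : ℕ => n / 2) atTop atTop := by
    refine tendsto_atTop_atTop.2 fun b => ⟨2 * b, fun n hn => by omega⟩
  have htwo : Tendsto (fun n : ℕ => 2 * (S n - S (n / 2))) atTop (𝓝 0) := by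
    have := (hS.sub (hS.comp hdiv)).const_mul 2
    simpa using this
  have hbound : ∀ n : ℕ, (n : ℝ) * a n ≤ 2 * (S n - S (n / 2)) := by
    intro n
    have hle : S n - S (n / 2) = ∑ j ∈ Finset.Ico (n / 2) n, a j := by
      rw [hSdef]
      simp only
      rw [Finset.sum_Ico_eq_sub _ (Nat.div_le_self n 2)]
    have hge : ((n - n / 2 : ℕ) : ℝ) * a n ≤ ∑ j ∈ Finset.Ico (n / 2) n, a j := by
      have := Finset.card_nsmul_le_sum (Finset.Ico (n / 2) n) a (a n)
        (fun j hj => hanti (le_of_lt (Finset.mem_Ico.1 hj).2))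
      simpa [Nat.card_Ico, nsmul_eq_mul] using this
    have hcast : (n : ℝ) ≤ 2 * ((n - n / 2 : ℕ) : ℝ) := by
      have hℕ : n ≤ 2 * (n - n / 2) := by omega
      exact_mod_cast hℕ
    rw [hle]
    nlinarith [hnn n, hge, hcast]
  have hna : Tendsto (fun n : ℕ => (n : ℝ) * a n) atTop (𝓝 0) :=
    squeeze_zero (fun n => mul_nonneg (Nat.cast_nonneg n) (hnn n)) hbound htwo
  -- partial sums of the series
  have hps : ∀ n, ∑ j ∈ Finset.range n, ((j : ℝ) + 1) * ((a j - a (j + 1)) / a 0)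
      = (S n - (n : ℝ) * a n) / a 0 := by
    intro n
    induction n with
    | zero => simp [hSdef]
    | succ n ih =>
      have hS1 : S (n + 1) = S n + a n := by
        rw [hSdef]; simp [Finset.sum_range_succ]
      rw [Finset.sum_range_succ, ih, hS1]
      field_simp
      push_cast
      ring
  have hnonneg : ∀ j : ℕ, 0 ≤ ((j : ℝ) + 1) * ((a j - a (j + 1)) / a 0) := fun j =>
    mul_nonneg (by positivity)
      (div_nonneg (sub_nonneg.2 (hanti (Nat.le_succ j))) h0.le)
  rw [hasSum_iff_tendsto_nat_of_nonneg hnonneg]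
  have heq : (fun n => ∑ j ∈ Finset.range n, ((j : ℝ) + 1) * ((a j - a (j + 1)) / a 0))
      = fun n => (S n - (n : ℝ) * a n) / a 0 := funext hps
  rw [heq]
  have := (hS.sub hna).div_const (a 0)
  simpa using this

section aux
variable {Ω : Type*} [MeasurableSpace Ω] {T : Ω → Ω} {B : Set Ω} {q : ℕ}

lemma Uset_succ (κ : ℕ) : Uset T B q (κ + 1) = Uset T B q κ \ Qset T B q κ := rfl

lemma Qset_subset (κ : ℕ) : Qset T B q κ ⊆ Uset T B q κ := inter_subset_left

lemma Uset_mono (κ : ℕ) : Uset T B q (κ + 1) ⊆ Uset T B q κ := diff_subset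

lemma Uset_subset_base : ∀ κ, Uset T B q κ ⊆ B
  | 0 => subset_rfl
  | κ + 1 => (Uset_mono κ).trans (Uset_subset_base κ)

lemma mem_Qset {x : Ω} {κ : ℕ} :
    x ∈ Qset T B q κ ↔ x ∈ Uset T B q κ ∧
      ∀ i ∈ Finset.Icc 1 q, T^[i] x ∉ Uset T B q κ := by
  simp [Qset, mem_iInter]

lemma Qset_eq_diff (κ : ℕ) : Qset T B q κ = Uset T B q κ \ Uset T B q (κ + 1) := by
  rw [Uset_succ, diff_diff_cancel_left (Qset_subset κ)]

lemma Uset_succ_inter (κ : ℕ) :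
    Uset T B q (κ + 1) = Uset T B q κ ∩ ⋃ i ∈ Finset.Icc 1 q, T^[i] ⁻¹' Uset T B q κ := by
  ext x
  simp only [Uset_succ, Qset, mem_diff, mem_inter_iff, mem_iInter, mem_iUnion, mem_preimage,
    mem_compl_iff, not_and, not_forall, not_not, exists_prop]
  tauto

lemma Uset_succ_eq_s8 : ∀ κ, Uset T B q (κ + 1) = B ∩ ⋃ i ∈ Finset.Icc 1 q, T^[i] ⁻¹' Uset T B q κ
  | 0 => Uset_succ_inter 0
  | κ + 1 => by
    rw [Uset_succ_inter (κ + 1)]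
    apply Subset.antisymm
    · exact inter_subset_inter_left _ (Uset_subset_base (κ + 1))
    · rintro x ⟨hxB, hxU⟩
      refine ⟨?_, hxU⟩
      rw [Uset_succ_eq_s8 κ]
      simp only [mem_iUnion, mem_preimage] at hxU
      obtain ⟨i, hi, hxi⟩ := hxU
      exact ⟨hxB, mem_iUnion₂.2 ⟨i, hi, Uset_mono κ hxi⟩⟩

lemma measurable_Uset (hT : Measurable T) (hB : MeasurableSet B) :
    ∀ κ, MeasurableSet (Uset T B q κ)
  | 0 => hB
  | κ + 1 => by
    have h := measurable_Uset hT hB κ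
    exact h.diff (h.inter (MeasurableSet.iInter fun i => MeasurableSet.iInter fun _ =>
      h.compl.preimage (hT.iterate i)))

lemma measurable_Qset (hT : Measurable T) (hB : MeasurableSet B) (κ : ℕ) :
    MeasurableSet (Qset T B q κ) :=
  (measurable_Uset hT hB κ).inter (MeasurableSet.iInter fun i => MeasurableSet.iInter fun _ =>
    (measurable_Uset hT hB κ).compl.preimage (hT.iterate i))

variable {μ : Measure Ω}

lemma hpres_iter (hT : Measurable T)
    (hpres : ∀ E : Set Ω, MeasurableSet E → μ (T ⁻¹' E) = μ E) :
    ∀ n (E : Set Ω), MeasurableSet E → μ (T^[n] ⁻¹' E) = μ E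
  | 0, E, _ => by simp
  | n + 1, E, hE => by
    rw [Function.iterate_succ, Set.preimage_comp, hpres _ ((hT.iterate n) hE),
      hpres_iter hT hpres n E hE]

/-- Existence of a unique "next cluster" time; we only need existence here. -/
lemma exists_next {κ : ℕ} {x : Ω} (hx : x ∈ Qset T B q (κ + 1)) :
    ∃ i ∈ Finset.Icc 1 q, T^[i] x ∈ Qset T B q κ := by
  have hxU : x ∈ Uset T B q (κ + 1) := Qset_subset _ hx
  have hxB : x ∈ B := Uset_subset_base _ hxU
  rw [Uset_succ_eq_s8 κ] at hxU
  obtain ⟨-, hU⟩ := hxU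
  simp only [mem_iUnion, mem_preimage] at hU
  obtain ⟨i, hi, hxi⟩ := hU
  refine ⟨i, hi, ?_⟩
  rw [Qset_eq_diff]
  refine ⟨hxi, fun hmem => ?_⟩
  have hx2 : x ∈ Uset T B q (κ + 2) := by
    rw [Uset_succ_eq_s8 (κ + 1)]
    exact ⟨hxB, mem_iUnion₂.2 ⟨i, hi, hmem⟩⟩
  rw [Uset_succ (κ + 1)] at hx2
  exact hx2.2 hx

/-- No two Q-points within gap ≤ q. -/
lemma Q_gap {κ : ℕ} {x : Ω} (hx : x ∈ Qset T B q κ) {j : ℕ} (hj : j ∈ Finset.Icc 1 q) :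
    T^[j] x ∉ Qset T B q κ :=
  fun h => (mem_Qset.1 hx).2 j hj (Qset_subset _ h)

lemma measure_Qset_mono (hT : Measurable T) (hB : MeasurableSet B)
    (hpres : ∀ E : Set Ω, MeasurableSet E → μ (T ⁻¹' E) = μ E) (κ : ℕ) :
    μ (Qset T B q (κ + 1)) ≤ μ (Qset T B q κ) := by
  set g : ℕ → Set Ω := fun i => Qset T B q (κ + 1) ∩ T^[i] ⁻¹' Qset T B q κ with hg
  set h : ℕ → Set Ω := fun i => T^[q - i] ⁻¹' g i with hh
  have hmg : ∀ i, MeasurableSet (g i) := fun i =>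
    (measurable_Qset hT hB _).inter ((measurable_Qset hT hB _).preimage (hT.iterate i))
  have hmh : ∀ i, MeasurableSet (h i) := fun i => (hmg i).preimage (hT.iterate _)
  -- cover
  have hcover : Qset T B q (κ + 1) = ⋃ i ∈ Finset.Icc 1 q, g i := by
    apply Subset.antisymm
    · intro x hx
      obtain ⟨i, hi, hxi⟩ := exists_next hx
      exact mem_iUnion₂.2 ⟨i, hi, hx, hxi⟩
    · exact iUnion₂_subset fun i hi => inter_subset_left
  -- pairwise disjointness of g
  have pd_g : (↑(Finset.Icc 1 q) : Set ℕ).PairwiseDisjoint g := by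
    have key : ∀ i ∈ Finset.Icc 1 q, ∀ i' ∈ Finset.Icc 1 q, i < i' → Disjoint (g i) (g i') := by
      intro i hi i' hi' hlt
      rw [Set.disjoint_left]
      rintro x ⟨-, hxi⟩ ⟨-, hxi'⟩
      simp only [mem_preimage] at hxi hxi'
      have hmem : i' - i ∈ Finset.Icc 1 q := by
        simp only [Finset.mem_Icc] at hi hi' ⊢; omega
      have : T^[i' - i] (T^[i] x) = T^[i'] x := by
        rw [← Function.iterate_add_apply]
        congr 1; omega
      exact Q_gap hxi hmem (this ▸ hxi')
    intro i hi i' hi' hne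
    rcases lt_or_gt_of_ne hne with hlt | hlt
    · exact key i hi i' hi' hlt
    · exact (key i' hi' i hi hlt).symm
  -- pairwise disjointness of h
  have pd_h : (↑(Finset.Icc 1 q) : Set ℕ).PairwiseDisjoint h := by
    have key : ∀ i ∈ Finset.Icc 1 q, ∀ i' ∈ Finset.Icc 1 q, i < i' → Disjoint (h i) (h i') := by
      intro i hi i' hi' hlt
      rw [Set.disjoint_left]
      intro x hxi hxi'
      simp only [hh, mem_preimage] at hxi hxi'
      have hyi : T^[q - i] x ∈ Qset T B q (κ + 1) := hxi.1
      have hyi' : T^[q - i'] x ∈ Qset T B q (κ + 1) := hxi'.1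
      simp only [Finset.mem_Icc] at hi hi'
      have hmem : i' - i ∈ Finset.Icc 1 q := by simp only [Finset.mem_Icc]; omega
      have : T^[i' - i] (T^[q - i'] x) = T^[q - i] x := by
        rw [← Function.iterate_add_apply]
        congr 1; omega
      exact Q_gap hyi' hmem (this ▸ hyi)
    intro i hi i' hi' hne
    rcases lt_or_gt_of_ne hne with hlt | hlt
    · exact key i hi i' hi' hlt
    · exact (key i' hi' i hi hlt).symm
  -- union of h sits inside T^[q] ⁻¹' Q κ
  have hsub : (⋃ i ∈ Finset.Icc 1 q, h i) ⊆ T^[q] ⁻¹' Qset T B q κ := by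
    refine iUnion₂_subset fun i hi x hx => ?_
    simp only [hh, hg, mem_preimage] at hx ⊢
    have hx2 : T^[i] (T^[q - i] x) ∈ Qset T B q κ := hx.2
    rw [← Function.iterate_add_apply] at hx2
    simp only [Finset.mem_Icc] at hi
    have heq : i + (q - i) = q := by omega
    rwa [heq] at hx2
  calc μ (Qset T B q (κ + 1)) = ∑ i ∈ Finset.Icc 1 q, μ (g i) := by
        rw [hcover, measure_biUnion_finset pd_g fun i _ => hmg i]
    _ = ∑ i ∈ Finset.Icc 1 q, μ (h i) := by
        refine Finset.sum_congr rfl fun i _ => ?_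
        rw [hh]
        exact (hpres_iter hT hpres _ _ (hmg i)).symm
    _ = μ (⋃ i ∈ Finset.Icc 1 q, h i) := by
        rw [measure_biUnion_finset pd_h fun i _ => hmh i]
    _ ≤ μ (T^[q] ⁻¹' Qset T B q κ) := measure_mono hsub
    _ = μ (Qset T B q κ) := hpres_iter hT hpres _ _ (measurable_Qset hT hB κ)

end aux

theorem mean_cluster_size_eq {Ω : Type*} [MeasurableSpace Ω] (μ : Measure Ω)
    [IsProbabilityMeasure μ] (T : Ω → Ω) (hT : Measurable T) (B : Set Ω)
    (hB : MeasurableSet B)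
    (hpres : ∀ E : Set Ω, MeasurableSet E → μ (T ⁻¹' E) = μ E)
    (q : ℕ) (hq : 1 ≤ q)
    (hUinf : μ (Uinf T B q) = 0) (hQ0 : 0 < μ (Qset T B q 0)) :
    HasSum
      (fun j : ℕ => ((j : ℝ) + 1) *
        (((μ (Qset T B q j)).toReal - (μ (Qset T B q (j + 1))).toReal)
          / (μ (Qset T B q 0)).toReal))
      ((μ B).toReal / (μ (Qset T B q 0)).toReal) := by
  have hfin : ∀ s : Set Ω, μ s ≠ ⊤ := fun s => measure_ne_top μ s
  have hnn : ∀ n : ℕ, 0 ≤ (μ (Qset T B q n)).toReal := fun n => ENNReal.toReal_nonneg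
  have hanti : Antitone fun n : ℕ => (μ (Qset T B q n)).toReal :=
    antitone_nat_of_succ_le fun n =>
      ENNReal.toReal_mono (hfin _) (measure_Qset_mono hT hB hpres n)
  have h0 : 0 < (μ (Qset T B q 0)).toReal := ENNReal.toReal_pos hQ0.ne' (hfin _)
  -- decomposition of μ B
  have hstep : ∀ n : ℕ, μ (Uset T B q (n + 1)) + μ (Qset T B q n) = μ (Uset T B q n) := by
    intro n
    have hu := measure_union (μ := μ)
      (Set.disjoint_sdiff_left (t := Uset T B q n) (s := Qset T B q n))
      (measurable_Qset hT hB n)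
    rw [diff_union_of_subset (Qset_subset n)] at hu
    rw [Uset_succ, ← hu]
  have hUQ : ∀ n : ℕ, μ (Uset T B q n) + ∑ j ∈ Finset.range n, μ (Qset T B q j) = μ B := by
    intro n
    induction n with
    | zero => simp [Uset]
    | succ n ih =>
      rw [Finset.sum_range_succ]
      calc μ (Uset T B q (n + 1)) + (∑ j ∈ Finset.range n, μ (Qset T B q j) + μ (Qset T B q n))
          = (μ (Uset T B q (n + 1)) + μ (Qset T B q n)) + ∑ j ∈ Finset.range n, μ (Qset T B q j) := by
            ring
        _ = μ (Uset T B q n) + ∑ j ∈ Finset.range n, μ (Qset T B q j) := by rw [hstep n]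
        _ = μ B := ih
  -- convergence of μ (Uset n) to 0
  have hU0 : Tendsto (fun n : ℕ => μ (Uset T B q n)) atTop (𝓝 0) := by
    have ht := tendsto_measure_iInter_atTop (μ := μ) (s := fun n => Uset T B q n)
      (fun n => (measurable_Uset hT hB n).nullMeasurableSet)
      (antitone_nat_of_succ_le Uset_mono) ⟨0, hfin _⟩
    have : μ (⋂ n, Uset T B q n) = 0 := hUinf
    rw [this] at ht
    exact ht
  have huR : Tendsto (fun n : ℕ => (μ (Uset T B q n)).toReal) atTop (𝓝 0) := by
    have := (ENNReal.tendsto_toReal (by simp)).comp hU0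
    simpa [Function.comp_def] using this
  -- partial sums of toReal measures
  have hsum : ∀ n : ℕ, (μ (Uset T B q n)).toReal
      + ∑ j ∈ Finset.range n, (μ (Qset T B q j)).toReal = (μ B).toReal := by
    intro n
    have h := congrArg ENNReal.toReal (hUQ n)
    rwa [ENNReal.toReal_add (hfin _) (by
        exact (ENNReal.sum_lt_top.2 fun a _ => (hfin _).lt_top).ne),
      ENNReal.toReal_sum fun a _ => hfin _] at h
  have hS : Tendsto (fun n : ℕ => ∑ j ∈ Finset.range n, (μ (Qset T B q j)).toReal)
      atTop (𝓝 (μ B).toReal) := by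
    have heq : (fun n : ℕ => ∑ j ∈ Finset.range n, (μ (Qset T B q j)).toReal)
        = fun n => (μ B).toReal - (μ (Uset T B q n)).toReal := by
      funext n
      linarith [hsum n]
    rw [heq]
    simpa using tendsto_const_nhds.sub huR
  exact hasSum_helper hnn hanti h0 hS
end

section
/- U^∞ ⊆ ⋃_{r=1}^{q} T^{−r}(U^∞); that is, every point of U^∞ returns to U^∞ after at most q iterations of T. -/
open Set MeasureTheory

theorem Uinf_subset_union_preimages {Ω : Type*} (T : Ω → Ω) (B : Set Ω)
    (q : ℕ) (hq : 1 ≤ q) :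
    Uinf T B q ⊆ ⋃ r ∈ Finset.Icc 1 q, T^[r] ⁻¹' Uinf T B q := by
  have hanti : Antitone (Uset T B q) := antitone_nat_of_succ_le fun κ => by
    show Uset T B q (κ + 1) ⊆ Uset T B q κ
    rw [Uset]
    exact diff_subset
  intro x hx
  have hxU : ∀ κ, x ∈ Uset T B q κ := fun κ => mem_iInter.mp hx κ
  by_contra hcon
  have hex : ∀ r : ℕ, ∃ κ, r ∈ Finset.Icc 1 q → T^[r] x ∉ Uset T B q κ := by
    intro r
    by_cases hr : r ∈ Finset.Icc 1 q
    · have : T^[r] x ∉ Uinf T B q := fun h => hcon (mem_iUnion₂.mpr ⟨r, hr, h⟩)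
      simp only [Uinf, mem_iInter, not_forall] at this
      obtain ⟨κ, hκ⟩ := this
      exact ⟨κ, fun _ => hκ⟩
    · exact ⟨0, fun h => absurd h hr⟩
  choose g hg using hex
  set N := (Finset.Icc 1 q).sup g with hN
  have hx1 : x ∈ Uset T B q (N + 1) := hxU (N + 1)
  rw [Uset] at hx1
  have : ¬ x ∈ ⋂ i ∈ Finset.Icc 1 q, T^[i] ⁻¹' (Uset T B q N)ᶜ := by
    intro h
    exact hx1.2 ⟨hxU N, h⟩
  simp only [mem_iInter, mem_preimage, mem_compl_iff, not_forall, not_not] at this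
  obtain ⟨i, hi, hiU⟩ := this
  exact hg i hi (hanti (Finset.le_sup hi) hiU)
end

section
/- The set B^∞ := ⋃_{i=0}^{q} T^{−i}(U^∞) satisfies B^∞ ⊆ T^{−1}(B^∞); consequently, if T is measure-preserving for a probability measure μ, then μ(T^{−1}(B^∞) Δ B^∞) = 0, where Δ denotes symmetric difference. -/
open Set MeasureTheory

lemma Uset_anti {Ω : Type*} (T : Ω → Ω) (B : Set Ω) (q : ℕ) :
    Antitone (Uset T B q) :=
  antitone_nat_of_succ_le fun _ => Set.diff_subset

lemma Uset_meas {Ω : Type*} [MeasurableSpace Ω] {T : Ω → Ω} (hT : Measurable T)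
    {B : Set Ω} (hB : MeasurableSet B) (q : ℕ) :
    ∀ κ, MeasurableSet (Uset T B q κ) := by
  intro κ
  induction κ with
  | zero => exact hB
  | succ n ih =>
    exact ih.diff (ih.inter (Finset.measurableSet_biInter _
      fun i _ => (hT.iterate i) ih.compl))

lemma Uinf_return {Ω : Type*} {T : Ω → Ω} {B : Set Ω} {q : ℕ} {x : Ω}
    (hx : x ∈ Uinf T B q) : ∃ j ∈ Finset.Icc 1 q, T^[j] x ∈ Uinf T B q := by
  by_contra hcon
  push_neg at hcon
  have h1 : ∀ j : ℕ, ∃ κ, j ∈ Finset.Icc 1 q → T^[j] x ∉ Uset T B q κ := by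
    intro j
    by_cases hj : j ∈ Finset.Icc 1 q
    · have := hcon j hj
      simp only [Uinf, Set.mem_iInter, not_forall] at this
      obtain ⟨κ, hκ⟩ := this
      exact ⟨κ, fun _ => hκ⟩
    · exact ⟨0, fun h => absurd h hj⟩
  choose κf hκf using h1
  set κ := (Finset.Icc 1 q).sup κf with hκdef
  have hxκ : x ∈ Uset T B q κ := Set.mem_iInter.1 hx κ
  have hxκ1 : x ∈ Uset T B q (κ + 1) := Set.mem_iInter.1 hx (κ + 1)
  apply (Set.mem_diff _).1 hxκ1 |>.2
  refine ⟨hxκ, ?_⟩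
  simp only [Set.mem_iInter, Set.mem_preimage, Set.mem_compl_iff]
  intro j hj
  exact fun h => hκf j hj (Uset_anti T B q (Finset.le_sup hj) h)

theorem Binf_almost_invariant {Ω : Type*} [MeasurableSpace Ω] (μ : Measure Ω)
    [IsProbabilityMeasure μ] (T : Ω → Ω) (hT : Measurable T) (B : Set Ω)
    (hB : MeasurableSet B)
    (hpres : ∀ E : Set Ω, MeasurableSet E → μ (T ⁻¹' E) = μ E)
    (q : ℕ) (hq : 1 ≤ q) :
    (⋃ i ∈ Finset.range (q + 1), T^[i] ⁻¹' Uinf T B q) ⊆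
        T ⁻¹' (⋃ i ∈ Finset.range (q + 1), T^[i] ⁻¹' Uinf T B q) ∧
    μ (symmDiff (T ⁻¹' (⋃ i ∈ Finset.range (q + 1), T^[i] ⁻¹' Uinf T B q))
        (⋃ i ∈ Finset.range (q + 1), T^[i] ⁻¹' Uinf T B q)) = 0 := by
  set A : Set Ω := ⋃ i ∈ Finset.range (q + 1), T^[i] ⁻¹' Uinf T B q with hAdef
  have hsub : A ⊆ T ⁻¹' A := by
    intro x hx
    simp only [hAdef, Set.mem_iUnion, Finset.mem_range, Set.mem_preimage] at hx ⊢
    obtain ⟨i, hi, hxi⟩ := hx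
    match i with
    | 0 =>
      obtain ⟨j, hj, hjx⟩ := Uinf_return hxi
      rw [Finset.mem_Icc] at hj
      refine ⟨j - 1, by omega, ?_⟩
      rw [← Function.iterate_succ_apply]
      have : (j - 1).succ = j := by omega
      rw [this]
      simpa using hjx
    | i + 1 =>
      exact ⟨i, by omega, by rw [← Function.iterate_succ_apply]; exact hxi⟩
  have hAmeas : MeasurableSet A := by
    refine Finset.measurableSet_biUnion _ fun i _ => (hT.iterate i) ?_
    exact MeasurableSet.iInter fun κ => Uset_meas hT hB q κ
  refine ⟨hsub, ?_⟩
  have hdiff2 : A \ (T ⁻¹' A) = ∅ := Set.diff_eq_empty.2 hsub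
  have hdiff1 : μ (T ⁻¹' A \ A) = 0 := by
    rw [measure_diff hsub hAmeas.nullMeasurableSet (measure_ne_top μ A),
      hpres A hAmeas, tsub_self]
  calc μ (symmDiff (T ⁻¹' A) A) = μ ((T ⁻¹' A \ A) ∪ (A \ T ⁻¹' A)) := by
        rw [Set.symmDiff_def]
    _ = 0 := by
        rw [hdiff2, Set.union_empty, hdiff1]
end

section
/- If T is ergodic with respect to μ and μ(W_{q+1}) > 0, then μ(U^∞) = 0. -/
open Set MeasureTheory

lemma key_step {Ω : Type*} (T : Ω → Ω) (B : Set Ω) (q : ℕ) (x : Ω)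
    (hx : x ∈ Uinf T B q) (κ : ℕ) :
    ∃ i, 1 ≤ i ∧ i ≤ q ∧ T^[i] x ∈ Uset T B q κ := by
  have h1 : x ∈ Uset T B q (κ + 1) := mem_iInter.1 hx (κ + 1)
  simp only [Uset, mem_diff, mem_inter_iff, not_and, mem_iInter, mem_preimage,
    mem_compl_iff, Finset.mem_Icc, not_forall] at h1
  obtain ⟨hu, h2⟩ := h1
  obtain ⟨i, hi, hni⟩ := h2 hu
  exact ⟨i, hi.1, hi.2, not_not.1 hni⟩

lemma key {Ω : Type*} (T : Ω → Ω) (B : Set Ω) (q : ℕ) (x : Ω)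
    (hx : x ∈ Uinf T B q) :
    ∃ i, 1 ≤ i ∧ i ≤ q ∧ T^[i] x ∈ Uinf T B q := by
  by_contra h
  push_neg at h
  have h' : ∀ i : ℕ, ∃ κ, ¬ (1 ≤ i ∧ i ≤ q ∧ T^[i] x ∈ Uset T B q κ) := by
    intro i
    by_cases h1 : 1 ≤ i ∧ i ≤ q
    · have := h i h1.1 h1.2
      simp only [Uinf, mem_iInter, not_forall] at this
      obtain ⟨κ, hκ⟩ := this
      exact ⟨κ, fun hc => hκ hc.2.2⟩
    · exact ⟨0, fun hc => h1 ⟨hc.1, hc.2.1⟩⟩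
  choose f hf using h'
  obtain ⟨i, h1, h2, hi⟩ := key_step T B q x hx ((Finset.Icc 1 q).sup f)
  exact hf i ⟨h1, h2, Uset_anti T B q (Finset.le_sup (Finset.mem_Icc.2 ⟨h1, h2⟩)) hi⟩

lemma chain {Ω : Type*} (T : Ω → Ω) (B : Set Ω) (q : ℕ) (hq : 1 ≤ q) (x : Ω)
    (hx : x ∈ Uinf T B q) (n : ℕ) :
    ∃ j, j ≤ q ∧ T^[n + j] x ∈ Uinf T B q := by
  induction n with
  | zero => exact ⟨0, Nat.zero_le q, by simpa using hx⟩
  | succ n ih =>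
    obtain ⟨j, hj, hmem⟩ := ih
    rcases Nat.eq_zero_or_pos j with h0 | hpos
    · subst h0
      simp only [Nat.add_zero] at hmem
      obtain ⟨i, hi1, hi2, hi⟩ := key T B q _ hmem
      refine ⟨i - 1, by omega, ?_⟩
      rw [show n + 1 + (i - 1) = i + n by omega, Function.iterate_add_apply]
      exact hi
    · refine ⟨j - 1, by omega, ?_⟩
      rwa [show n + 1 + (j - 1) = n + j by omega]

lemma avoid_W {Ω : Type*} (T : Ω → Ω) (B : Set Ω) (q : ℕ) (hq : 1 ≤ q) (x : Ω)
    (hx : x ∈ Uinf T B q) (n : ℕ) :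
    T^[n] x ∉ Wset T B (q + 1) := by
  obtain ⟨j, hj, hmem⟩ := chain T B q hq x hx n
  intro hw
  have hB' : T^[n + j] x ∈ B := mem_iInter.1 hmem 0
  simp only [Wset, mem_iInter, Finset.mem_range, mem_preimage, mem_compl_iff] at hw
  have := hw j (by omega)
  rw [← Function.iterate_add_apply, Nat.add_comm j n] at this
  exact this hB'

theorem measure_Uinf_eq_zero_of_ergodic {Ω : Type*} [MeasurableSpace Ω] (μ : Measure Ω)
    [IsProbabilityMeasure μ] (T : Ω → Ω) (hT : Measurable T) (B : Set Ω)
    (hB : MeasurableSet B)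
    (hpres : ∀ E : Set Ω, MeasurableSet E → μ (T ⁻¹' E) = μ E)
    (herg : ∀ E : Set Ω, MeasurableSet E → T ⁻¹' E = E → μ E = 0 ∨ μ E = 1)
    (q : ℕ) (hq : 1 ≤ q) (hW : 0 < μ (Wset T B (q + 1))) :
    μ (Uinf T B q) = 0 := by
  set W := Wset T B (q + 1) with hWdef
  have hWmeas : MeasurableSet W := by
    apply MeasurableSet.biInter (Set.to_countable _)
    exact fun i _ => (hT.iterate i) hB.compl
  set C : ℕ → Set Ω := fun n => ⋃ k, T^[n + k] ⁻¹' W with hCdef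
  have hCmeas : ∀ n, MeasurableSet (C n) :=
    fun n => MeasurableSet.iUnion fun k => (hT.iterate _) hWmeas
  have hCsucc : ∀ n, C (n + 1) ⊆ C n := by
    intro n x hx
    obtain ⟨k, hk⟩ := mem_iUnion.1 hx
    exact mem_iUnion.2 ⟨k + 1, by rwa [show n + (k + 1) = n + 1 + k by omega]⟩
  have hCanti : Antitone C := antitone_nat_of_succ_le hCsucc
  have hCpre : ∀ n, T ⁻¹' C n = C (n + 1) := by
    intro n
    ext x
    simp only [hCdef, mem_preimage, mem_iUnion]
    constructor
    · rintro ⟨k, hk⟩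
      refine ⟨k, ?_⟩
      rwa [show n + 1 + k = n + k + 1 by omega, Function.iterate_succ_apply]
    · rintro ⟨k, hk⟩
      refine ⟨k, ?_⟩
      rwa [show n + 1 + k = n + k + 1 by omega, Function.iterate_succ_apply] at hk
  set A : Set Ω := ⋂ n, C n with hAdef
  have hAmeas : MeasurableSet A := MeasurableSet.iInter hCmeas
  have hTA : T ⁻¹' A = A := by
    rw [hAdef, preimage_iInter]
    apply Set.Subset.antisymm
    · intro x hx
      apply mem_iInter.2
      intro n
      have := mem_iInter.1 hx n
      rw [hCpre n] at this
      exact hCsucc n this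
    · intro x hx
      refine mem_iInter.2 fun n => ?_
      rw [hCpre n]
      exact mem_iInter.1 hx (n + 1)
  have hCconst : ∀ n, μ (C n) = μ (C 0) := by
    intro n
    induction n with
    | zero => rfl
    | succ n ih => rw [← hCpre n, hpres _ (hCmeas n)]; exact ih
  have hC0W : W ⊆ C 0 := by
    intro x hx
    exact mem_iUnion.2 ⟨0, by simpa using hx⟩
  have hdiffnull : μ (C 0 \ A) = 0 := by
    have : C 0 \ A = ⋃ n, (C 0 \ C n) := by
      rw [hAdef, diff_iInter]
    rw [this]
    apply measure_iUnion_null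
    intro n
    have := measure_diff (hCanti (Nat.zero_le n)) (hCmeas n).nullMeasurableSet
      (measure_ne_top μ _)
    rw [this, hCconst n, tsub_self]
  have hApos : 0 < μ A := by
    have h1 : μ (C 0) ≤ μ A + μ (C 0 \ A) := by
      calc μ (C 0) ≤ μ (A ∪ (C 0 \ A)) := measure_mono (fun x hx => by
            by_cases hA : x ∈ A
            · exact Or.inl hA
            · exact Or.inr ⟨hx, hA⟩)
        _ ≤ μ A + μ (C 0 \ A) := measure_union_le _ _
    rw [hdiffnull, add_zero] at h1
    exact lt_of_lt_of_le (lt_of_lt_of_le hW (measure_mono hC0W)) h1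
  have hA1 : μ A = 1 := by
    rcases herg A hAmeas hTA with h | h
    · exact absurd h (ne_of_gt hApos)
    · exact h
  have hdisj : Uinf T B q ⊆ Aᶜ := by
    intro x hx hA
    have hx0 : x ∈ C 0 := mem_iInter.1 hA 0
    obtain ⟨k, hk⟩ := mem_iUnion.1 hx0
    simp only [mem_preimage] at hk
    rw [zero_add] at hk
    exact avoid_W T B q hq x hx k hk
  refine le_antisymm ?_ zero_le
  calc μ (Uinf T B q) ≤ μ Aᶜ := measure_mono hdisj
    _ = 1 - μ A := by rw [measure_compl hAmeas (measure_ne_top μ _), measure_univ]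
    _ = 0 := by rw [hA1]; simp
end

section
/- Let (u_n) be a sequence of real numbers and set α_n = P(Y_0 ≤ u_n). If α_n < 1 for all n and α_n → 1 as n → ∞, then the ratio θ_n = P(X_0 > u_n, X_1 ≤ u_n, X_2 ≤ u_n) / P(X_0 > u_n) converges to 1/2. -/
open MeasureTheory ProbabilityTheory Filter

/-- For the Maximum Moving Average process `X_n = max (Y_{n−2}, Y_n)` built from an iid
sequence `(Y_n)_{n ≥ −2}` (here reindexed so that `Y k` stands for `Y_{k−2}`, whence
`X n = max (Y n, Y (n+2))`): if `α_n = P(Y_0 ≤ u_n) < 1` and `α_n → 1`, then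
`θ_n = P(X_0 > u_n, X_1 ≤ u_n, X_2 ≤ u_n) / P(X_0 > u_n) → 1/2`. -/
theorem MMA_extremal_index {Ω : Type*} [MeasurableSpace Ω] (P : Measure Ω)
    [IsProbabilityMeasure P] (Y : ℕ → Ω → ℝ) (hmeas : ∀ n, Measurable (Y n))
    (hindep : iIndepFun Y P)
    (hident : ∀ n, IdentDistrib (Y n) (Y 0) P P)
    (X : ℕ → Ω → ℝ) (hX : ∀ n ω, X n ω = max (Y n ω) (Y (n + 2) ω))
    (u : ℕ → ℝ) (α : ℕ → ℝ) (hα : ∀ n, α n = (P {ω | Y 0 ω ≤ u n}).toReal)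
    (hlt : ∀ n, α n < 1) (hlim : Tendsto α atTop (nhds 1)) :
    Tendsto
      (fun n =>
        (P {ω | X 0 ω > u n ∧ X 1 ω ≤ u n ∧ X 2 ω ≤ u n}).toReal /
          (P {ω | X 0 ω > u n}).toReal)
      atTop (nhds (1 / 2)) := by
  set a : ℕ → ENNReal := fun n => P (Y 0 ⁻¹' Set.Iic (u n)) with ha_def
  have haα : ∀ n, α n = (a n).toReal := hα
  have hak : ∀ k n, P (Y k ⁻¹' Set.Iic (u n)) = a n := fun k n =>
    (hident k).measure_mem_eq measurableSet_Iic
  have ha_le : ∀ n, a n ≤ 1 := fun n => prob_le_one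
  have hprod := iIndepFun_iff_measure_inter_preimage_eq_mul.mp hindep
  -- numerator
  have hnum : ∀ n, P {ω | X 0 ω > u n ∧ X 1 ω ≤ u n ∧ X 2 ω ≤ u n}
      = (1 - a n) * (a n) ^ 4 := by
    intro n
    have hI := hprod (Finset.range 5)
      (sets := fun i => if i = 0 then Set.Ioi (u n) else Set.Iic (u n))
      (fun i _ => by by_cases hi : i = 0 <;> simp [hi])
    have hset1 : (⋂ i ∈ Finset.range 5,
        Y i ⁻¹' (if i = 0 then Set.Ioi (u n) else Set.Iic (u n)))
        = (Y 0 ⁻¹' Set.Ioi (u n)) ∩ ((Y 1 ⁻¹' Set.Iic (u n)) ∩ ((Y 2 ⁻¹' Set.Iic (u n))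
          ∩ ((Y 3 ⁻¹' Set.Iic (u n)) ∩ (Y 4 ⁻¹' Set.Iic (u n))))) := by
      show (⋂ i ∈ ({0, 1, 2, 3, 4} : Finset ℕ), _) = _
      simp only [Finset.set_biInter_insert, Finset.set_biInter_singleton]
      norm_num
    have hset2 : {ω | X 0 ω > u n ∧ X 1 ω ≤ u n ∧ X 2 ω ≤ u n}
        = (Y 0 ⁻¹' Set.Ioi (u n)) ∩ ((Y 1 ⁻¹' Set.Iic (u n)) ∩ ((Y 2 ⁻¹' Set.Iic (u n))
          ∩ ((Y 3 ⁻¹' Set.Iic (u n)) ∩ (Y 4 ⁻¹' Set.Iic (u n))))) := by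
      ext ω
      simp only [Set.mem_setOf_eq, hX, lt_max_iff, max_le_iff, Set.mem_inter_iff,
        Set.mem_preimage, Set.mem_Ioi, Set.mem_Iic]
      norm_num
      constructor
      · rintro ⟨h0 | h0, ⟨h1, h3⟩, h2, h4⟩
        · exact ⟨h0, h1, h2, h3, h4⟩
        · exact absurd h0 (not_lt.2 h2)
      · rintro ⟨h0, h1, h2, h3, h4⟩
        exact ⟨Or.inl h0, ⟨h1, h3⟩, h2, h4⟩
    have hpr : (∏ i ∈ Finset.range 5,
        P (Y i ⁻¹' (if i = 0 then Set.Ioi (u n) else Set.Iic (u n))))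
        = (1 - a n) * (a n) ^ 4 := by
      rw [Finset.prod_range_succ, Finset.prod_range_succ, Finset.prod_range_succ,
        Finset.prod_range_succ, Finset.prod_range_one]
      norm_num
      have h0 : P (Y 0 ⁻¹' Set.Ioi (u n)) = 1 - a n := by
        have he : Y 0 ⁻¹' Set.Ioi (u n) = (Y 0 ⁻¹' Set.Iic (u n))ᶜ := by
          ext ω; simp [not_le]
        rw [he, prob_compl_eq_one_sub ((hmeas 0) measurableSet_Iic)]
      rw [h0, hak 1 n, hak 2 n, hak 3 n, hak 4 n]
      ring
    rw [hset2, ← hset1, hI, hpr]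
  -- denominator
  have hden : ∀ n, P {ω | X 0 ω > u n} = 1 - (a n) ^ 2 := by
    intro n
    have hseteq : {ω | X 0 ω > u n}
        = ((Y 0 ⁻¹' Set.Iic (u n)) ∩ (Y 2 ⁻¹' Set.Iic (u n)))ᶜ := by
      ext ω
      simp only [Set.mem_setOf_eq, hX, lt_max_iff, Set.mem_compl_iff, Set.mem_inter_iff,
        Set.mem_preimage, Set.mem_Iic, not_and_or, not_le]
    have hI := hprod ({0, 2} : Finset ℕ) (sets := fun _ => Set.Iic (u n))
      (fun i _ => measurableSet_Iic)
    have hset2 : (⋂ i ∈ ({0, 2} : Finset ℕ), Y i ⁻¹' Set.Iic (u n))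
        = (Y 0 ⁻¹' Set.Iic (u n)) ∩ (Y 2 ⁻¹' Set.Iic (u n)) := by
      simp only [Finset.set_biInter_insert, Finset.set_biInter_singleton]
    rw [hset2, Finset.prod_pair (by norm_num), hak 0 n, hak 2 n, ← sq] at hI
    rw [hseteq, prob_compl_eq_one_sub
      (((hmeas 0) measurableSet_Iic).inter ((hmeas 2) measurableSet_Iic)), hI]
  -- real arithmetic
  have key : ∀ n, (P {ω | X 0 ω > u n ∧ X 1 ω ≤ u n ∧ X 2 ω ≤ u n}).toReal /
      (P {ω | X 0 ω > u n}).toReal = (α n) ^ 4 / (1 + α n) := by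
    intro n
    rw [hnum n, hden n]
    have h1 : ((1 - a n) * (a n) ^ 4).toReal = (1 - α n) * (α n) ^ 4 := by
      rw [ENNReal.toReal_mul, ENNReal.toReal_sub_of_le (ha_le n) ENNReal.one_ne_top,
        ENNReal.toReal_pow, ENNReal.toReal_one, haα n]
    have h2 : (1 - (a n) ^ 2).toReal = 1 - (α n) ^ 2 := by
      rw [ENNReal.toReal_sub_of_le (by
          calc (a n) ^ 2 ≤ 1 ^ 2 := pow_le_pow_left' (ha_le n) 2
          _ = 1 := one_pow 2) ENNReal.one_ne_top,
        ENNReal.toReal_pow, ENNReal.toReal_one, haα n]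
    rw [h1, h2]
    have hne : 1 - α n ≠ 0 := by have := hlt n; intro h; linarith
    have hfac : 1 - (α n) ^ 2 = (1 - α n) * (1 + α n) := by ring
    rw [hfac, mul_div_mul_left _ _ hne]
  simp only [key]
  have h1 : Tendsto (fun n => (α n) ^ 4) atTop (nhds 1) := by
    simpa using hlim.pow 4
  have h2 : Tendsto (fun n => 1 + α n) atTop (nhds 2) := by
    have := (tendsto_const_nhds (x := (1 : ℝ)) (f := atTop)).add hlim
    norm_num at this
    exact this
  have h3 := h1.div h2 (by norm_num)
  simpa [Pi.div_def] using h3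
end

section
/- For every u ∈ ℝ with α = P(Y_0 ≤ u) and every integer j ≥ 3, one has P(X_0 > u, X_1 ≤ u, X_2 ≤ u, X_j > u) ≤ 2(1−α)²α⁴. -/
open MeasureTheory ProbabilityTheory

section Aux

variable {Ω : Type*} [MeasurableSpace Ω] (P : Measure Ω)
    [IsProbabilityMeasure P] (Y : ℕ → Ω → ℝ)

/-- Product formula for the key event `{Y0>u, Y1≤u, Y2≤u, Y3≤u, Y4≤u, Yk>u}` for `k ≥ 5`. -/
lemma MMA_key (hmeas : ∀ n, Measurable (Y n)) (hindep : iIndepFun Y P)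
    (hident : ∀ n, IdentDistrib (Y n) (Y 0) P P)
    (u : ℝ) (α : ℝ) (hα : α = (P {ω | Y 0 ω ≤ u}).toReal)
    (k : ℕ) (hk : 5 ≤ k) :
    (P ((Y 0 ⁻¹' Set.Ioi u) ∩ (Y 1 ⁻¹' Set.Iic u) ∩ (Y 2 ⁻¹' Set.Iic u) ∩
        (Y 3 ⁻¹' Set.Iic u) ∩ (Y 4 ⁻¹' Set.Iic u) ∩ (Y k ⁻¹' Set.Ioi u))).toReal
      = (1 - α) ^ 2 * α ^ 4 := by
  classical
  set sets : ℕ → Set ℝ := fun i => if i = 0 ∨ i = k then Set.Ioi u else Set.Iic u with hsets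
  have hms : ∀ i, i ∈ ({0, 1, 2, 3, 4, k} : Finset ℕ) → MeasurableSet (sets i) := by
    intro i _
    by_cases h : i = 0 ∨ i = k <;> simp [hsets, h]
  have hprod := hindep.measure_inter_preimage_eq_mul ({0, 1, 2, 3, 4, k} : Finset ℕ) hms
  have h1 : (1 : ℕ) ≠ 0 ∧ (1 : ℕ) ≠ k := ⟨one_ne_zero, by omega⟩
  have h2 : (2 : ℕ) ≠ 0 ∧ (2 : ℕ) ≠ k := ⟨two_ne_zero, by omega⟩
  have h3 : (3 : ℕ) ≠ 0 ∧ (3 : ℕ) ≠ k := ⟨by omega, by omega⟩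
  have h4 : (4 : ℕ) ≠ 0 ∧ (4 : ℕ) ≠ k := ⟨by omega, by omega⟩
  have hk0 : k ≠ 0 := by omega
  have hsets0 : sets 0 = Set.Ioi u := by simp [hsets]
  have hsetsk : sets k = Set.Ioi u := by simp [hsets]
  have hsets1 : sets 1 = Set.Iic u := by simp [hsets, h1.1, h1.2]
  have hsets2 : sets 2 = Set.Iic u := by simp [hsets, h2.1, h2.2]
  have hsets3 : sets 3 = Set.Iic u := by simp [hsets, h3.1, h3.2]
  have hsets4 : sets 4 = Set.Iic u := by simp [hsets, h4.1, h4.2]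
  have hInter : (⋂ i ∈ ({0, 1, 2, 3, 4, k} : Finset ℕ), Y i ⁻¹' sets i)
      = (Y 0 ⁻¹' Set.Ioi u) ∩ (Y 1 ⁻¹' Set.Iic u) ∩ (Y 2 ⁻¹' Set.Iic u) ∩
        (Y 3 ⁻¹' Set.Iic u) ∩ (Y 4 ⁻¹' Set.Iic u) ∩ (Y k ⁻¹' Set.Ioi u) := by
    simp only [Finset.mem_insert, Finset.mem_singleton, Set.iInter_iInter_eq_or_left,
      Set.iInter_iInter_eq_left, hsets0, hsets1, hsets2, hsets3, hsets4, hsetsk]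
    ext ω; simp; tauto
  have hnodup : (k : ℕ) ∉ ({0, 1, 2, 3, 4} : Finset ℕ) := by
    simp only [Finset.mem_insert, Finset.mem_singleton]; omega
  -- probabilities of single events
  set a : ENNReal := P (Y 0 ⁻¹' Set.Iic u) with ha
  have hiden : ∀ n, P (Y n ⁻¹' Set.Iic u) = a := by
    intro n
    rw [ha]
    exact (hident n).measure_mem_eq measurableSet_Iic
  have hle1 : a ≤ 1 := prob_le_one
  have hane : a ≠ ⊤ := (lt_of_le_of_lt hle1 ENNReal.one_lt_top).ne
  have hcompl : ∀ n, P (Y n ⁻¹' Set.Ioi u) = 1 - a := by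
    intro n
    have hc : Y n ⁻¹' Set.Ioi u = (Y n ⁻¹' Set.Iic u)ᶜ := by
      ext ω; simp [not_le]
    rw [hc, measure_compl ((hmeas n) measurableSet_Iic) (measure_ne_top _ _),
      measure_univ, hiden n]
  have hprodval : ∏ i ∈ ({0, 1, 2, 3, 4, k} : Finset ℕ), P (Y i ⁻¹' sets i)
      = (1 - a) * (a * (a * (a * (a * (1 - a))))) := by
    rw [Finset.prod_insert (by simp only [Finset.mem_insert, Finset.mem_singleton]; omega),
      Finset.prod_insert (by simp only [Finset.mem_insert, Finset.mem_singleton]; omega),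
      Finset.prod_insert (by simp only [Finset.mem_insert, Finset.mem_singleton]; omega),
      Finset.prod_insert (by simp only [Finset.mem_insert, Finset.mem_singleton]; omega),
      Finset.prod_insert (by simp only [Finset.mem_singleton]; omega),
      Finset.prod_singleton, hsets0, hsets1, hsets2, hsets3, hsets4, hsetsk,
      hcompl, hcompl, hiden, hiden, hiden, hiden]
  have hαa : α = a.toReal := by
    rw [hα]; congr 1
  have htr : (1 - a).toReal = 1 - α := by
    rw [hαa, ENNReal.toReal_sub_of_le hle1 ENNReal.one_ne_top, ENNReal.toReal_one]
  rw [hInter] at hprod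
  rw [hprod, hprodval]
  rw [ENNReal.toReal_mul, ENNReal.toReal_mul, ENNReal.toReal_mul, ENNReal.toReal_mul,
    ENNReal.toReal_mul, htr, ← hαa]
  ring

end Aux

/-- For the Maximum Moving Average process `X_n = max (Y_{n−2}, Y_n)` built from an iid
sequence `(Y_n)_{n ≥ −2}` (here reindexed so that `Y k` stands for `Y_{k−2}`, whence
`X n = max (Y n, Y (n+2))`), with `α = P(Y_0 ≤ u)`: for every `j ≥ 3`,
`P(X_0 > u, X_1 ≤ u, X_2 ≤ u, X_j > u) ≤ 2(1−α)²α⁴`. -/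
theorem MMA_Dprime_estimate {Ω : Type*} [MeasurableSpace Ω] (P : Measure Ω)
    [IsProbabilityMeasure P] (Y : ℕ → Ω → ℝ) (hmeas : ∀ n, Measurable (Y n))
    (hindep : iIndepFun Y P)
    (hident : ∀ n, IdentDistrib (Y n) (Y 0) P P)
    (X : ℕ → Ω → ℝ) (hX : ∀ n ω, X n ω = max (Y n ω) (Y (n + 2) ω))
    (u : ℝ) (α : ℝ) (hα : α = (P {ω | Y 0 ω ≤ u}).toReal)
    (j : ℕ) (hj : 3 ≤ j) :
    (P {ω | X 0 ω > u ∧ X 1 ω ≤ u ∧ X 2 ω ≤ u ∧ X j ω > u}).toReal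
      ≤ 2 * (1 - α) ^ 2 * α ^ 4 := by
  classical
  set A : ℕ → Set Ω := fun k => (Y 0 ⁻¹' Set.Ioi u) ∩ (Y 1 ⁻¹' Set.Iic u) ∩
      (Y 2 ⁻¹' Set.Iic u) ∩ (Y 3 ⁻¹' Set.Iic u) ∩ (Y 4 ⁻¹' Set.Iic u) ∩
      (Y k ⁻¹' Set.Ioi u) with hA
  have hkey : ∀ k, 5 ≤ k → (P (A k)).toReal = (1 - α) ^ 2 * α ^ 4 := fun k hk =>
    MMA_key P Y hmeas hindep hident u α hα k hk
  have hα0 : 0 ≤ α := by rw [hα]; exact ENNReal.toReal_nonneg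
  have hc0 : 0 ≤ (1 - α) ^ 2 * α ^ 4 := by positivity
  set E : Set Ω := {ω | X 0 ω > u ∧ X 1 ω ≤ u ∧ X 2 ω ≤ u ∧ X j ω > u} with hE
  have hEmem : ∀ ω ∈ E, u < Y 0 ω ∧ Y 1 ω ≤ u ∧ Y 2 ω ≤ u ∧ Y 3 ω ≤ u ∧ Y 4 ω ≤ u ∧
      (u < Y j ω ∨ u < Y (j + 2) ω) := by
    rintro ω ⟨h0, h1, h2, hjj⟩
    rw [hX] at h0 h1 h2 hjj
    rw [max_le_iff] at h1 h2
    rw [gt_iff_lt, lt_max_iff] at h0 hjj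
    refine ⟨?_, h1.1, h2.1, h1.2, h2.2, hjj⟩
    rcases h0 with h | h
    · exact h
    · exact absurd h2.1 (not_le.2 h)
  have hmemA : ∀ k ω, u < Y 0 ω → Y 1 ω ≤ u → Y 2 ω ≤ u → Y 3 ω ≤ u → Y 4 ω ≤ u →
      u < Y k ω → ω ∈ A k := by
    intro k ω a0 a1 a2 a3 a4 ak
    exact ⟨⟨⟨⟨⟨a0, a1⟩, a2⟩, a3⟩, a4⟩, ak⟩
  rcases lt_or_ge j 5 with h5 | h5
  · interval_cases j
    rotate_left
    · -- j = 4 : Y 4 ≤ u forces u < Y 6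
      have hsub : E ⊆ A 6 := by
        intro ω hω
        obtain ⟨a0, a1, a2, a3, a4, hor⟩ := hEmem ω hω
        refine hmemA 6 ω a0 a1 a2 a3 a4 ?_
        rcases hor with h | h
        · exact absurd a4 (not_le.2 h)
        · exact h
      have := ENNReal.toReal_mono (measure_ne_top P _) (measure_mono hsub)
      calc (P E).toReal ≤ (P (A 6)).toReal := this
        _ = (1 - α) ^ 2 * α ^ 4 := hkey 6 (by norm_num)
        _ ≤ 2 * (1 - α) ^ 2 * α ^ 4 := by nlinarith
    -- j = 3 : Y 3 ≤ u forces u < Y 5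
    have hsub : E ⊆ A 5 := by
      intro ω hω
      obtain ⟨a0, a1, a2, a3, a4, hor⟩ := hEmem ω hω
      refine hmemA 5 ω a0 a1 a2 a3 a4 ?_
      rcases hor with h | h
      · exact absurd a3 (not_le.2 h)
      · exact h
    have := ENNReal.toReal_mono (measure_ne_top P _) (measure_mono hsub)
    calc (P E).toReal ≤ (P (A 5)).toReal := this
      _ = (1 - α) ^ 2 * α ^ 4 := hkey 5 le_rfl
      _ ≤ 2 * (1 - α) ^ 2 * α ^ 4 := by nlinarith
  · -- j ≥ 5
    have hsub : E ⊆ A j ∪ A (j + 2) := by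
      intro ω hω
      obtain ⟨a0, a1, a2, a3, a4, hor⟩ := hEmem ω hω
      rcases hor with h | h
      · exact Or.inl (hmemA j ω a0 a1 a2 a3 a4 h)
      · exact Or.inr (hmemA (j + 2) ω a0 a1 a2 a3 a4 h)
    have h1 := ENNReal.toReal_mono (measure_ne_top P _) (measure_mono hsub)
    have h2 := ENNReal.toReal_mono (by
        exact (ENNReal.add_ne_top.2 ⟨measure_ne_top P _, measure_ne_top P _⟩))
      (measure_union_le (A j) (A (j + 2)))
    rw [ENNReal.toReal_add (measure_ne_top P _) (measure_ne_top P _)] at h2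
    calc (P E).toReal ≤ (P (A j ∪ A (j + 2))).toReal := h1
      _ ≤ (P (A j)).toReal + (P (A (j + 2))).toReal := h2
      _ = 2 * (1 - α) ^ 2 * α ^ 4 := by
          rw [hkey j h5, hkey (j + 2) (by omega)]; ring
end

section
/- Let 0 < ε < 1/12, q = 2 and B = {x ∈ [0,1) : |x − 1/3| < ε}. Then for every integer κ ≥ 0, U^κ = {x ∈ [0,1) : |x − 1/3| < ε·4^{−κ}} and Q^κ = {x ∈ [0,1) : ε·4^{−(κ+1)} ≤ |x − 1/3| < ε·4^{−κ}}. Consequently Leb(Q^κ) = (3/2)·ε·4^{−κ}, Leb(Q⁰)/Leb(B) = 3/4, and for every κ ≥ 1, (Leb(Q^{κ−1}) − Leb(Q^κ))/Leb(Q⁰) = (3/4)·4^{−(κ−1)}. -/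
open Set MeasureTheory

/-- The doubling map `x ↦ 2x mod 1` on `[0,1)`. -/
noncomputable def doubling (x : ℝ) : ℝ := Int.fract (2 * x)

lemma doubling_near {δ x : ℝ} (hδ : δ < 1/12) (hx : |x - 1/3| < δ) :
    doubling x = 2 * x ∧ doubling (doubling x) = 4 * x - 1 := by
  have hδ0 : 0 < δ := (abs_nonneg _).trans_lt hx
  rw [abs_sub_lt_iff] at hx
  obtain ⟨hx1, hx2⟩ := hx
  have h1 : doubling x = 2 * x := Int.fract_eq_self.mpr ⟨by linarith, by linarith⟩
  refine ⟨h1, ?_⟩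
  rw [h1]
  show Int.fract (2 * (2 * x)) = 4 * x - 1
  have he : 2 * (2 * x) = (4 * x - 1) + ((1:ℤ) : ℝ) := by push_cast; ring
  rw [he, Int.fract_add_intCast, Int.fract_eq_self.mpr ⟨by linarith, by linarith⟩]

lemma mem_step {δ x : ℝ} (hδ : δ < 1/12)
    (hx : x ∈ {y ∈ Ico (0:ℝ) 1 | |y - 1/3| < δ}) :
    (doubling^[1] x ∉ {y ∈ Ico (0:ℝ) 1 | |y - 1/3| < δ}) ∧
    (doubling^[2] x ∈ {y ∈ Ico (0:ℝ) 1 | |y - 1/3| < δ} ↔ |x - 1/3| < δ/4) := by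
  obtain ⟨hxI, hxd⟩ := hx
  have hδ0 : 0 < δ := (abs_nonneg _).trans_lt hxd
  obtain ⟨h1, h2⟩ := doubling_near hδ hxd
  have e1 : doubling^[1] x = doubling x := rfl
  have e2 : doubling^[2] x = doubling (doubling x) := rfl
  have hxd' := abs_sub_lt_iff.mp hxd
  constructor
  · rw [e1, h1]
    rintro ⟨-, habs⟩
    rw [abs_sub_lt_iff] at habs
    linarith [habs.1, hxd'.2]
  · rw [e2, h2]
    have key : |4*x - 1 - 1/3| = 4 * |x - 1/3| := by
      rw [show (4*x - 1 - 1/3 : ℝ) = 4*(x-1/3) by ring, abs_mul]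
      norm_num
    constructor
    · rintro ⟨-, habs⟩
      rw [key] at habs; linarith
    · intro h
      refine ⟨⟨by linarith [hxd'.1, hxd'.2], by linarith [hxd'.1, hxd'.2]⟩, ?_⟩
      rw [key]; linarith

lemma UQ_sets {ε : ℝ} (hε0 : 0 < ε) (hε : ε < 1/12) (κ : ℕ) :
    Uset doubling {x ∈ Ico (0:ℝ) 1 | |x - 1/3| < ε} 2 κ
      = {x ∈ Ico (0:ℝ) 1 | |x - 1/3| < ε / 4 ^ κ} := by
  induction κ with
  | zero => simp [Uset]
  | succ n ih =>
    have h4 : (0:ℝ) < 4 ^ n := by positivity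
    have h1 : (1:ℝ) ≤ 4 ^ n := one_le_pow₀ (by norm_num)
    set δ := ε / 4 ^ n with hδdef
    have hδ0 : 0 < δ := by positivity
    have hδle : δ ≤ ε := div_le_self hε0.le h1
    have hδ : δ < 1/12 := lt_of_le_of_lt hδle hε
    have hnext : ε / 4 ^ (n+1) = δ / 4 := by
      rw [hδdef, pow_succ, div_div]
    rw [Uset, ih, hnext]
    ext x
    simp only [show (Finset.Icc 1 2 : Finset ℕ) = {1, 2} from by decide,
      Finset.set_biInter_insert, Finset.set_biInter_singleton, Set.mem_diff,
      Set.mem_inter_iff, Set.mem_preimage, Set.mem_compl_iff]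
    constructor
    · rintro ⟨hA, hn⟩
      have ms := mem_step hδ hA
      have h2 : doubling^[2] x ∈ {y ∈ Ico (0:ℝ) 1 | |y - 1/3| < δ} := by
        by_contra hc
        exact hn ⟨hA, ms.1, hc⟩
      exact ⟨hA.1, ms.2.mp h2⟩
    · rintro ⟨hI, habs⟩
      have hA : x ∈ {y ∈ Ico (0:ℝ) 1 | |y - 1/3| < δ} :=
        ⟨hI, lt_of_lt_of_le habs (by linarith)⟩
      have ms := mem_step hδ hA
      exact ⟨hA, fun hc => hc.2.2 (ms.2.mpr habs)⟩

lemma Q_sets {ε : ℝ} (hε0 : 0 < ε) (hε : ε < 1/12) (κ : ℕ) :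
    Qset doubling {x ∈ Ico (0:ℝ) 1 | |x - 1/3| < ε} 2 κ
      = {x ∈ Ico (0:ℝ) 1 | ε / 4 ^ (κ+1) ≤ |x - 1/3| ∧ |x - 1/3| < ε / 4 ^ κ} := by
  have h4 : (0:ℝ) < 4 ^ κ := by positivity
  have h1 : (1:ℝ) ≤ 4 ^ κ := one_le_pow₀ (by norm_num)
  set δ := ε / 4 ^ κ with hδdef
  have hδ0 : 0 < δ := by positivity
  have hδle : δ ≤ ε := div_le_self hε0.le h1
  have hδ : δ < 1/12 := lt_of_le_of_lt hδle hε
  have hnext : ε / 4 ^ (κ+1) = δ / 4 := by rw [hδdef, pow_succ, div_div]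
  rw [Qset, UQ_sets hε0 hε, hnext]
  ext x
  simp only [show (Finset.Icc 1 2 : Finset ℕ) = {1, 2} from by decide,
    Finset.set_biInter_insert, Finset.set_biInter_singleton, Set.mem_inter_iff,
    Set.mem_preimage, Set.mem_compl_iff]
  constructor
  · rintro ⟨hA, h1', h2'⟩
    have ms := mem_step hδ hA
    refine ⟨hA.1, ?_, hA.2⟩
    by_contra hc
    push_neg at hc
    exact h2' (ms.2.mpr hc)
  · rintro ⟨hI, hge, hlt⟩
    have hA : x ∈ {y ∈ Ico (0:ℝ) 1 | |y - 1/3| < δ} := ⟨hI, hlt⟩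
    have ms := mem_step hδ hA
    exact ⟨hA, ms.1, fun hc => absurd (ms.2.mp hc) (not_lt.mpr hge)⟩

lemma vol_set {a b : ℝ} (ha : 0 ≤ a) (hab : a ≤ b) (hb : b < 1/12) :
    (volume {x ∈ Ico (0:ℝ) 1 | a ≤ |x - 1/3| ∧ |x - 1/3| < b}).toReal = 2*b - 2*a := by
  have hset : {x ∈ Ico (0:ℝ) 1 | a ≤ |x - 1/3| ∧ |x - 1/3| < b}
      = Ioo (1/3 - b) (1/3 + b) \ Ioo (1/3 - a) (1/3 + a) := by
    ext x
    simp only [mem_setOf_eq, mem_Ico, mem_diff, mem_Ioo]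
    constructor
    · rintro ⟨-, hle, hlt⟩
      rw [abs_sub_lt_iff] at hlt
      refine ⟨⟨by linarith [hlt.2], by linarith [hlt.1]⟩, ?_⟩
      rintro ⟨hc1, hc2⟩
      have : |x - 1/3| < a := abs_sub_lt_iff.mpr ⟨by linarith, by linarith⟩
      linarith
    · rintro ⟨⟨h1, h2⟩, hno⟩
      have hb' : |x - 1/3| < b := abs_sub_lt_iff.mpr ⟨by linarith, by linarith⟩
      have ha' : a ≤ |x - 1/3| := by
        by_contra hc
        push_neg at hc
        rw [abs_sub_lt_iff] at hc
        exact hno ⟨by linarith [hc.2], by linarith [hc.1]⟩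
      exact ⟨⟨by linarith, by linarith⟩, ha', hb'⟩
  rw [hset, measure_diff (Ioo_subset_Ioo (by linarith) (by linarith))
      measurableSet_Ioo.nullMeasurableSet measure_Ioo_lt_top.ne,
    Real.volume_Ioo, Real.volume_Ioo,
    show (1/3 + b - (1/3 - b) : ℝ) = 2*b by ring,
    show (1/3 + a - (1/3 - a) : ℝ) = 2*a by ring,
    ← ENNReal.ofReal_sub _ (by linarith : (0:ℝ) ≤ 2*a),
    ENNReal.toReal_ofReal (by linarith)]

lemma Q_vol {ε : ℝ} (hε0 : 0 < ε) (hε : ε < 1/12) (κ : ℕ) :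
    (volume (Qset doubling {x ∈ Ico (0:ℝ) 1 | |x - 1/3| < ε} 2 κ)).toReal
      = 3 / 2 * ε / 4 ^ κ := by
  have h4 : (0:ℝ) < 4 ^ κ := by positivity
  have h1 : (1:ℝ) ≤ 4 ^ κ := one_le_pow₀ (by norm_num)
  have hab : ε / 4 ^ (κ+1) ≤ ε / 4 ^ κ := by
    rw [pow_succ]
    apply div_le_div_of_nonneg_left hε0.le (by positivity)
    nlinarith
  have hb : ε / 4 ^ κ < 1/12 := lt_of_le_of_lt (div_le_self hε0.le h1) hε
  rw [Q_sets hε0 hε, vol_set (by positivity) hab hb, pow_succ]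
  field_simp
  ring

theorem doubling_one_periodic_point {ε : ℝ} (hε0 : 0 < ε) (hε : ε < 1 / 12)
    (B : Set ℝ) (hB : B = {x ∈ Ico (0 : ℝ) 1 | |x - 1 / 3| < ε}) :
    (∀ κ : ℕ,
      Uset doubling B 2 κ = {x ∈ Ico (0 : ℝ) 1 | |x - 1 / 3| < ε / 4 ^ κ} ∧
      Qset doubling B 2 κ
        = {x ∈ Ico (0 : ℝ) 1 | ε / 4 ^ (κ + 1) ≤ |x - 1 / 3| ∧ |x - 1 / 3| < ε / 4 ^ κ} ∧
      (volume (Qset doubling B 2 κ)).toReal = 3 / 2 * ε / 4 ^ κ) ∧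
    (volume (Qset doubling B 2 0)).toReal / (volume B).toReal = 3 / 4 ∧
    ∀ κ : ℕ, 1 ≤ κ →
      ((volume (Qset doubling B 2 (κ - 1))).toReal
          - (volume (Qset doubling B 2 κ)).toReal)
        / (volume (Qset doubling B 2 0)).toReal = 3 / 4 / 4 ^ (κ - 1) := by
  subst hB
  have hε' : ε < 1/12 := hε
  have hBvol : (volume {x ∈ Ico (0:ℝ) 1 | |x - 1/3| < ε}).toReal = 2 * ε := by
    have : {x ∈ Ico (0:ℝ) 1 | |x - 1/3| < ε}
        = {x ∈ Ico (0:ℝ) 1 | 0 ≤ |x - 1/3| ∧ |x - 1/3| < ε} := by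
      ext x; simp [abs_nonneg]
    rw [this, vol_set le_rfl hε0.le hε']
    ring
  refine ⟨fun κ => ⟨UQ_sets hε0 hε' κ, Q_sets hε0 hε' κ, Q_vol hε0 hε' κ⟩, ?_, ?_⟩
  · rw [Q_vol hε0 hε' 0, hBvol]
    rw [pow_zero]
    field_simp
    ring
  · intro κ hκ
    obtain ⟨j, rfl⟩ : ∃ j, κ = j + 1 := ⟨κ - 1, by omega⟩
    have hj : j + 1 - 1 = j := rfl
    rw [hj, Q_vol hε0 hε', Q_vol hε0 hε', Q_vol hε0 hε', pow_zero, pow_succ]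
    have h4 : (0:ℝ) < 4 ^ j := by positivity
    field_simp
    ring
end
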